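/- Let f: ℝ^d → [0,1]^K be a randomized function (outputting class score expectations) satisfying: for all k and all α with ‖α‖_p ≤ 1, E f_k(x) ≤ e^{ε} E f_k(x+α) + δ and E f_k(x+α) ≤ e^{ε} E f_k(x) + δ. If for some label k, E f_k(x) > e^{2ε} max_{i≠k} E f_i(x) + (1+e^{ε})δ, then for all α with ‖α‖_p ≤ 1 and all i ≠ k, E f_k(x+α) > E f_i(x+α). -/

import Mathlib

/-! Multiplying the target inequality by `c = exp ε`, the DP bound for class `k` gives
`c · f_k(x+α) ≥ f_k(x) - δ`, while the DP bound for class `i` gives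
`c · f_i(x+α) ≤ c² f_i(x) + c δ`; the robustness margin is exactly the gap between the two. -/

theorem lt_of_two_sided_margin {c δ a b a' b' : ℝ} (hc : 0 < c)
    (ha : a ≤ c * a' + δ) (hb : b' ≤ c * b + δ) (hab : c * c * b + (1 + c) * δ < a) :
    b' < a' := by
  have hcb := mul_le_mul_of_nonneg_left hb hc.le
  have : c * b' < c * a' := by linarith
  exact lt_of_mul_lt_mul_left this hc.le

theorem stmt_12_general (d K : ℕ) (p : ENNReal)
    (F : PiLp p (fun _ : Fin d => ℝ) → Fin K → ℝ)
    (ε δ : ℝ)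
    (x : PiLp p (fun _ : Fin d => ℝ))
    (hDP : ∀ (k : Fin K) (α : PiLp p (fun _ : Fin d => ℝ)), ‖α‖ ≤ 1 →
      F x k ≤ Real.exp ε * F (x + α) k + δ ∧ F (x + α) k ≤ Real.exp ε * F x k + δ)
    (k : Fin K)
    (hrob : ∀ i, i ≠ k → F x k > Real.exp (2 * ε) * F x i + (1 + Real.exp ε) * δ) :
    ∀ (α : PiLp p (fun _ : Fin d => ℝ)), ‖α‖ ≤ 1 →
      ∀ i, i ≠ k → F (x + α) k > F (x + α) i := by
  intro α hα i hik
  have hmargin := hrob i hik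
  rw [two_mul, Real.exp_add] at hmargin
  exact lt_of_two_sided_margin (Real.exp_pos ε) (hDP k α hα).1 (hDP i α hα).2 hmargin

theorem stmt_12 (d K : ℕ) (p : ENNReal) (hp : 1 ≤ p)
    (F : PiLp p (fun _ : Fin d => ℝ) → Fin K → ℝ)
    (hF : ∀ x k, F x k ∈ Set.Icc (0 : ℝ) 1)
    (ε δ : ℝ) (hε : ε > 0) (hδ : δ ≥ 0)
    (x : PiLp p (fun _ : Fin d => ℝ))
    (hDP : ∀ (k : Fin K) (α : PiLp p (fun _ : Fin d => ℝ)), ‖α‖ ≤ 1 →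
      F x k ≤ Real.exp ε * F (x + α) k + δ ∧ F (x + α) k ≤ Real.exp ε * F x k + δ)
    (k : Fin K)
    (hrob : ∀ i, i ≠ k → F x k > Real.exp (2 * ε) * F x i + (1 + Real.exp ε) * δ) :
    ∀ (α : PiLp p (fun _ : Fin d => ℝ)), ‖α‖ ≤ 1 →
      ∀ i, i ≠ k → F (x + α) k > F (x + α) i :=
  stmt_12_general d K p F ε δ x hDP k hrob
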